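/- Let w ∈ S_n with descent composition C(w) = (α₁, ..., α_k), and for 0 ≤ i ≤ n let w_{(i)} ∈ S_{n+1} be obtained by inserting the letter n+1 after position i. Then C(w_{(i)}) covers C(w) in the (1-colored) composition poset Co for every i, these n+1 compositions are pairwise distinct, and every cover of C(w) in Co arises this way. In particular every composition of n has exactly n+1 covers in Co. -/
import Mathlib


/-- The descent composition of a word (list of natural numbers): the list of
lengths of its maximal increasing runs, from left to right. -/
def dcomp : List ℕ → List ℕ
  | [] => []
  | v :: rest =>
    match rest, dcomp rest with
    | v₂ :: _, len :: t => if v < v₂ then (len + 1) :: t else 1 :: len :: t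
    | _, _ => [1]

/-- `β` covers `α` in Björner–Stanley's (1-colored) composition poset `Co`:
either `α = ∅` and `β = (1)`, or `β` is obtained from `α` by adding `1` to a
part, or by adding `1` to a part and splitting it into two parts. -/
def CoverC (α β : List ℕ) : Prop :=
  (α = [] ∧ β = [1]) ∨
  (∃ (l r : List ℕ) (a : ℕ), α = l ++ a :: r ∧ β = l ++ (a + 1) :: r) ∨
  (∃ (l r : List ℕ) (a h : ℕ), h < a ∧ α = l ++ a :: r ∧
      β = l ++ (h + 1) :: (a - h) :: r)

lemma dcomp_cons_unfold (v : ℕ) (rest : List ℕ) :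
    dcomp (v :: rest) = match rest, dcomp rest with
      | v₂ :: _, len :: t => if v < v₂ then (len + 1) :: t else 1 :: len :: t
      | _, _ => [1] := rfl

lemma dcomp_nil : dcomp [] = [] := rfl

lemma dcomp_singleton (v : ℕ) : dcomp [v] = [1] := rfl

def bump : List ℕ → List ℕ
  | [] => []
  | a :: r => (a + 1) :: r

def insb : List ℕ → ℕ → List ℕ
  | [], _ => [1]
  | a :: r, i =>
    if i < a then (i + 1) :: (a - i) :: r
    else if i = a then (a + 1) :: r
    else a :: insb r (i - a)

lemma dcomp_ne_nil (v : ℕ) (t : List ℕ) : dcomp (v :: t) ≠ [] := by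
  rw [dcomp_cons_unfold]
  cases t with
  | nil => simp
  | cons x s =>
    rcases h : dcomp (x :: s) with _ | ⟨len, tl⟩
    · simp
    · simp only
      split_ifs <;> simp

lemma dcomp_cons_cons (v x : ℕ) (s : List ℕ) {len : ℕ} {tl : List ℕ}
    (h : dcomp (x :: s) = len :: tl) :
    dcomp (v :: x :: s) = if v < x then (len + 1) :: tl else 1 :: len :: tl := by
  rw [dcomp_cons_unfold, h]

lemma dcomp_cons' (v x : ℕ) (s : List ℕ) :
    dcomp (v :: x :: s) =
      if v < x then bump (dcomp (x :: s)) else 1 :: dcomp (x :: s) := by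
  rcases h : dcomp (x :: s) with _ | ⟨len, tl⟩
  · exact absurd h (dcomp_ne_nil x s)
  · rw [dcomp_cons_cons v x s h, bump]

lemma dcomp_pos : ∀ u : List ℕ, ∀ x ∈ dcomp u, 0 < x := by
  intro u
  induction u with
  | nil => simp [dcomp_nil]
  | cons v rest ih =>
    cases rest with
    | nil => simp [dcomp_singleton]
    | cons x s =>
      rcases h : dcomp (x :: s) with _ | ⟨len, tl⟩
      · exact absurd h (dcomp_ne_nil x s)
      · rw [dcomp_cons_cons v x s h]
        rw [h] at ih
        split_ifs <;> intro y hy <;> simp at hy <;>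
          rcases hy with hy | hy <;> first
            | omega
            | (first | exact ih y (by simp [hy]) | exact ih y (by simp; omega))

lemma dcomp_sum : ∀ u : List ℕ, (dcomp u).sum = u.length := by
  intro u
  induction u with
  | nil => rfl
  | cons v rest ih =>
    cases rest with
    | nil => simp [dcomp_singleton]
    | cons x s =>
      rcases h : dcomp (x :: s) with _ | ⟨len, tl⟩
      · exact absurd h (dcomp_ne_nil x s)
      · rw [dcomp_cons_cons v x s h]
        rw [h] at ih
        split_ifs <;> simp at ih ⊢ <;> omega

lemma insb_bump (a : ℕ) (r : List ℕ) (j : ℕ) :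
    insb ((a + 1) :: r) (j + 1) = bump (insb (a :: r) j) := by
  rcases lt_trichotomy j a with h | h | h
  · have h1 : j + 1 < a + 1 := by omega
    simp [insb, h, h1, bump, Nat.succ_sub_succ]
  · subst h
    simp [insb, bump]
  · have h1 : ¬ j + 1 < a + 1 := by omega
    have h2 : ¬ j < a := by omega
    have h3 : j + 1 ≠ a + 1 := by omega
    have h4 : j ≠ a := by omega
    simp [insb, h1, h2, h3, h4, bump, Nat.succ_sub_succ]

lemma dcomp_insert (n : ℕ) : ∀ u : List ℕ, (∀ x ∈ u, x < n) → ∀ i, i ≤ u.length →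
    dcomp (u.take i ++ n :: u.drop i) = insb (dcomp u) i := by
  intro u
  induction u with
  | nil =>
    intro _ i hi
    have h0 : i = 0 := by simpa using hi
    subst h0
    simp [dcomp_singleton, insb, dcomp_nil]
  | cons v t ih =>
    intro hb i hi
    have hv : v < n := hb v (by simp)
    cases i with
    | zero =>
      -- word = n :: v :: t
      simp only [List.take_zero, List.drop_zero, List.nil_append]
      rcases h : dcomp (v :: t) with _ | ⟨a, r⟩
      · exact absurd h (dcomp_ne_nil v t)
      · have ha : 0 < a := dcomp_pos (v :: t) a (by rw [h]; simp)
        rw [dcomp_cons_cons n v t h]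
        have : ¬ n < v := by omega
        rw [if_neg this]
        simp [insb, h, ha]
    | succ j =>
      have hj : j ≤ t.length := by simpa using hi
      have hIH := ih (fun x hx => hb x (by simp [hx])) j hj
      simp only [List.take_succ_cons, List.drop_succ_cons, List.cons_append]
      cases t with
      | nil =>
        have h0 : j = 0 := by simpa using hj
        subst h0
        simp only [List.take_nil, List.drop_nil, List.nil_append]
        rw [dcomp_cons_cons v n [] (dcomp_singleton n), if_pos hv]
        simp [dcomp_singleton, insb]
      | cons x s =>
        rcases h : dcomp (x :: s) with _ | ⟨a, r⟩
        · exact absurd h (dcomp_ne_nil x s)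
        · have ha : 0 < a := dcomp_pos (x :: s) a (by rw [h]; simp)
          rw [h] at hIH
          by_cases hvx : v < x
          · -- dcomp (v :: x :: s) = (a+1) :: r ; goal uses bump
            rw [dcomp_cons_cons v x s h, if_pos hvx, insb_bump, ← hIH]
            -- goal : dcomp (v :: ((x::s).take j ++ n :: (x::s).drop j)) = bump (dcomp (...))
            cases j with
            | zero =>
              simp only [List.take_zero, List.drop_zero, List.nil_append]
              rw [dcomp_cons' v n (x :: s), if_pos hv]
            | succ j' =>
              simp only [List.take_succ_cons, List.drop_succ_cons, List.cons_append]
              rw [dcomp_cons' v x (s.take j' ++ n :: s.drop j'), if_pos hvx]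
          · -- dcomp (v :: x :: s) = 1 :: a :: r
            rw [dcomp_cons_cons v x s h, if_neg hvx]
            cases j with
            | zero =>
              simp only [List.take_zero, List.drop_zero, List.nil_append]
              rw [dcomp_cons' v n (x :: s), if_pos hv]
              simp only [List.take_zero, List.drop_zero, List.nil_append] at hIH
              rw [hIH]
              simp [insb, ha, bump]
            | succ j' =>
              simp only [List.take_succ_cons, List.drop_succ_cons, List.cons_append]
              rw [dcomp_cons' v x (s.take j' ++ n :: s.drop j'), if_neg hvx]
              simp only [List.take_succ_cons, List.drop_succ_cons, List.cons_append] at hIH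
              rw [hIH]
              have h1 : ¬ (j' + 1 + 1 < 1) := by omega
              have h2 : j' + 1 + 1 ≠ 1 := by omega
              simp [insb, h1, h2]

lemma coverC_cons (a : ℕ) (ha : 0 < a) {r β : List ℕ} (hc : CoverC r β) :
    CoverC (a :: r) (a :: β) := by
  rcases hc with ⟨h1, h2⟩ | ⟨l, r', a', h1, h2⟩ | ⟨l, r', a', h', hlt, h1, h2⟩
  · subst h1; subst h2
    right; right
    exact ⟨[], [], a, a - 1, by omega, by simp, by simp; omega⟩
  · right; left
    exact ⟨a :: l, r', a', by simp [h1], by simp [h2]⟩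
  · right; right
    exact ⟨a :: l, r', a', h', hlt, by simp [h1], by simp [h2]⟩

lemma coverC_insb : ∀ α : List ℕ, (∀ x ∈ α, 0 < x) → ∀ i ≤ α.sum,
    CoverC α (insb α i) := by
  intro α
  induction α with
  | nil =>
    intro _ i hi
    left
    exact ⟨rfl, by simp [insb]⟩
  | cons a r ih =>
    intro hpos i hi
    have ha : 0 < a := hpos a (by simp)
    rcases lt_trichotomy i a with h | h | h
    · right; right
      exact ⟨[], r, a, i, h, by simp, by simp [insb, h]⟩
    · subst h
      right; left
      exact ⟨[], r, i, by simp, by simp [insb]⟩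
    · have h1 : ¬ i < a := by omega
      have h2 : i ≠ a := by omega
      have : insb (a :: r) i = a :: insb r (i - a) := by simp [insb, h1, h2]
      rw [this]
      exact coverC_cons a ha (ih (fun x hx => hpos x (by simp [hx])) (i - a)
        (by simp at hi; omega))

lemma insb_ne_one_cons : ∀ r : List ℕ, (∀ x ∈ r, 0 < x) → ∀ m, 1 ≤ m → m ≤ r.sum →
    insb r m ≠ 1 :: r := by
  intro r
  induction r with
  | nil => intro _ m h1 h2; simp at h2; omega
  | cons b r' ih =>
    intro hpos m h1 h2
    have hb : 0 < b := hpos b (by simp)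
    rcases lt_trichotomy m b with h | h | h
    · simp [insb, h]; omega
    · subst h
      simp [insb]
    · have hn1 : ¬ m < b := by omega
      have hn2 : m ≠ b := by omega
      simp only [insb, if_neg hn1, if_neg hn2]
      intro hcontra
      simp at hcontra
      obtain ⟨hb1, hrest⟩ := hcontra
      subst hb1
      exact ih (fun x hx => hpos x (by simp [hx])) (m - 1) (by omega)
        (by simp at h2; omega) hrest

lemma insb_inj : ∀ α : List ℕ, (∀ x ∈ α, 0 < x) → ∀ i j, i ≤ α.sum → j ≤ α.sum →
    insb α i = insb α j → i = j := by
  intro α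
  induction α with
  | nil => intro _ i j hi hj _; simp at hi hj; omega
  | cons a r ih =>
    intro hpos i j hi hj heq
    have ha : 0 < a := hpos a (by simp)
    have hpos' : ∀ x ∈ r, 0 < x := fun x hx => hpos x (by simp [hx])
    have hsum : i ≤ a + r.sum := by simpa using hi
    have hsum' : j ≤ a + r.sum := by simpa using hj
    -- helper for mixed case
    have key : ∀ i j : ℕ, i < a → ¬ j < a → j ≠ a → j ≤ a + r.sum →
        insb (a :: r) i = insb (a :: r) j → False := by
      intro i j h1 h2 h3 hjs he
      simp only [insb, if_pos h1, if_neg h2, if_neg h3] at he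
      obtain ⟨e1, e2⟩ : i + 1 = a ∧ (a - i) :: r = insb r (j - a) := by
        simpa using he
      have : a - i = 1 := by omega
      rw [this] at e2
      exact insb_ne_one_cons r hpos' (j - a) (by omega) (by omega) e2.symm
    rcases lt_trichotomy i a with h | h | h <;> rcases lt_trichotomy j a with h' | h' | h'
    · simp [insb, h, h'] at heq; omega
    · subst h'
      simp [insb, h] at heq
      all_goals omega
    · exact absurd (key i j h (by omega) (by omega) hsum' heq) (by simp)
    · subst h
      simp [insb, h'] at heq
      all_goals omega
    · omega
    · subst h
      have h1 : ¬ j < i := by omega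
      have h2 : j ≠ i := by omega
      simp [insb, h1, h2] at heq
    · exact absurd (key j i h' (by omega) (by omega) hsum heq.symm) (by simp)
    · subst h'
      have h1 : ¬ i < j := by omega
      have h2 : i ≠ j := by omega
      simp [insb, h1, h2] at heq
    · have h1 : ¬ i < a := by omega
      have h2 : i ≠ a := by omega
      have h3 : ¬ j < a := by omega
      have h4 : j ≠ a := by omega
      simp only [insb, if_neg h1, if_neg h2, if_neg h3, if_neg h4] at heq
      simp at heq
      have := ih hpos' (i - a) (j - a) (by omega) (by omega) heq
      omega

lemma insb_increment : ∀ (l : List ℕ) (a : ℕ) (r : List ℕ), 1 ≤ a →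
    insb (l ++ a :: r) (l.sum + a) = l ++ (a + 1) :: r := by
  intro l
  induction l with
  | nil => intro a r ha; simp [insb]
  | cons b l' ih =>
    intro a r ha
    have h1 : ¬ b + l'.sum + a < b := by omega
    have h2 : b + l'.sum + a ≠ b := by omega
    simp only [List.cons_append, List.sum_cons, insb, List.append_eq]
    rw [if_neg h1, if_neg h2, (by omega : b + l'.sum + a - b = l'.sum + a), ih a r ha]

lemma insb_split : ∀ (l : List ℕ) (a h : ℕ) (r : List ℕ), 1 ≤ h → h < a →
    insb (l ++ a :: r) (l.sum + h) = l ++ (h + 1) :: (a - h) :: r := by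
  intro l
  induction l with
  | nil => intro a h r h1 h2; simp [insb, h2]
  | cons b l' ih =>
    intro a h r h1 h2
    have h3 : ¬ b + l'.sum + h < b := by omega
    have h4 : b + l'.sum + h ≠ b := by omega
    simp only [List.cons_append, List.sum_cons, insb, List.append_eq]
    rw [if_neg h3, if_neg h4, (by omega : b + l'.sum + h - b = l'.sum + h), ih a h r h1 h2]

lemma insb_split0 : ∀ (l : List ℕ), (∀ x ∈ l, 0 < x) → ∀ (a : ℕ) (r : List ℕ), 1 ≤ a →
    ∃ i ≤ l.sum, insb (l ++ a :: r) i = l ++ 1 :: a :: r := by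
  intro l
  induction l using List.reverseRecOn with
  | nil =>
    intro _ a r ha
    have h0 : 0 < a := ha
    refine ⟨0, le_refl 0, ?_⟩
    simp only [List.nil_append, insb, if_pos h0, Nat.zero_add, Nat.sub_zero]
  | append_singleton l₀ c ih =>
    intro hpos a r ha
    have hc : 0 < c := hpos c (by simp)
    rcases Nat.lt_or_ge c 2 with hc2 | hc2
    · -- c = 1
      have hc1 : c = 1 := by omega
      subst hc1
      obtain ⟨i, hi, hins⟩ := ih (fun x hx => hpos x (by simp [hx])) 1 (a :: r) le_rfl
      refine ⟨i, by simp only [List.sum_append, List.sum_cons, List.sum_nil]; omega, ?_⟩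
      have e : l₀ ++ [1] ++ a :: r = l₀ ++ 1 :: a :: r := by simp
      rw [e, hins]
      simp
    · -- c ≥ 2 : use split with h = c - 1
      refine ⟨l₀.sum + (c - 1),
        by simp only [List.sum_append, List.sum_cons, List.sum_nil]; omega, ?_⟩
      have e : l₀ ++ [c] ++ a :: r = l₀ ++ c :: a :: r := by simp
      rw [e, insb_split l₀ c (c - 1) (a :: r) (by omega) (by omega)]
      have e1 : c - 1 + 1 = c := by omega
      have e2 : c - (c - 1) = 1 := by omega
      rw [e1, e2]
      simp

lemma coverC_surj {α β : List ℕ} (hpos : ∀ x ∈ α, 0 < x) (hc : CoverC α β) :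
    ∃ i ≤ α.sum, insb α i = β := by
  rcases hc with ⟨h1, h2⟩ | ⟨l, r, a, h1, h2⟩ | ⟨l, r, a, h, hlt, h1, h2⟩
  · subst h1; subst h2
    exact ⟨0, by simp, by simp [insb]⟩
  · subst h1; subst h2
    have ha : 1 ≤ a := hpos a (by simp)
    exact ⟨l.sum + a, by simp, insb_increment l a r ha⟩
  · subst h1; subst h2
    have ha : 1 ≤ a := hpos a (by simp)
    rcases Nat.eq_zero_or_pos h with h0 | h1
    · subst h0
      obtain ⟨i, hi, hins⟩ := insb_split0 l (fun x hx => hpos x (by simp [hx])) a r ha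
      refine ⟨i, by simp; omega, ?_⟩
      rw [hins]
      simp
    · exact ⟨l.sum + h, by simp; omega, insb_split l a h r h1 hlt⟩

/-- For `w ∈ S_n`, inserting the letter `n+1` (here: the largest value `n`)
after position `i` gives `w_{(i)}` with `C(w_{(i)})` covering `C(w)`; these
`n+1` compositions are pairwise distinct and are exactly the covers of `C(w)`.
In particular every composition of `n` has exactly `n+1` covers in `Co`. -/
theorem covers_descent_composition (n : ℕ) (w : Equiv.Perm (Fin n)) :
    (∀ i ≤ n, CoverC (dcomp ((List.finRange n).map fun k => ((w k : ℕ))))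
      (dcomp (((List.finRange n).map fun k => ((w k : ℕ))).take i ++
        n :: ((List.finRange n).map fun k => ((w k : ℕ))).drop i))) ∧
    Set.InjOn (fun i => dcomp (((List.finRange n).map fun k => ((w k : ℕ))).take i ++
        n :: ((List.finRange n).map fun k => ((w k : ℕ))).drop i)) (Set.Iic n) ∧
    (∀ β, CoverC (dcomp ((List.finRange n).map fun k => ((w k : ℕ)))) β →
      ∃ i ≤ n, dcomp (((List.finRange n).map fun k => ((w k : ℕ))).take i ++
        n :: ((List.finRange n).map fun k => ((w k : ℕ))).drop i) = β) ∧
    (∀ α : List ℕ, (∀ x ∈ α, 0 < x) → α.sum = n →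
      Nat.card {β : List ℕ // CoverC α β} = n + 1) := by
  set u : List ℕ := (List.finRange n).map fun k => ((w k : ℕ)) with hu
  have hb : ∀ x ∈ u, x < n := by
    intro x hx
    simp only [hu, List.mem_map] at hx
    obtain ⟨k, _, rfl⟩ := hx
    exact (w k).isLt
  have hlen : u.length = n := by simp [hu]
  have hsum : (dcomp u).sum = n := by rw [dcomp_sum, hlen]
  refine ⟨?_, ?_, ?_, ?_⟩
  · intro i hi
    rw [dcomp_insert n u hb i (by omega)]
    exact coverC_insb (dcomp u) (dcomp_pos u) i (by omega)
  · intro i hi j hj hEq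
    simp only [Set.mem_Iic] at hi hj
    simp only [dcomp_insert n u hb i (by omega), dcomp_insert n u hb j (by omega)] at hEq
    exact insb_inj (dcomp u) (dcomp_pos u) i j (by omega) (by omega) hEq
  · intro β hc
    obtain ⟨i, hi, hins⟩ := coverC_surj (dcomp_pos u) hc
    exact ⟨i, by omega, by rw [dcomp_insert n u hb i (by omega)]; exact hins⟩
  · intro α hpos hαsum
    have hf : Function.Bijective
        (fun i : Fin (n + 1) => (⟨insb α i, coverC_insb α hpos i (by omega)⟩ :
          {β : List ℕ // CoverC α β})) := by
      constructor
      · intro i j hij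
        simp only [Subtype.mk.injEq] at hij
        exact Fin.ext (insb_inj α hpos i j (by omega) (by omega) hij)
      · rintro ⟨β, hβ⟩
        obtain ⟨i, hi, hins⟩ := coverC_surj hpos hβ
        exact ⟨⟨i, by omega⟩, Subtype.ext hins⟩
    rw [← Nat.card_eq_of_bijective _ hf]
    simp
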